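/- Let a ∈ (0,1] and θ ∈ [−2a, 2a], and define, for x ∈ (0,1] and y ∈ [0,1], c(x,y) = 1 + (θ/(2a)) x^{1/a − 1} (2y − 1) sign(1/2 − x^{1/a}). Then c is a copula density; moreover, if |θ| < 2a then c(x,y) ≥ 1 − |θ|/(2a) > 0 for all x ∈ (0,1], y ∈ [0,1], i.e. c is bounded away from zero. -/

import Mathlib

open MeasureTheory

/-- The unit interval `[0,1]` as a subset of `ℝ`. -/
def I01 : Set ℝ := Set.Icc 0 1

/-- Lebesgue measure restricted to `[0,1]`. -/
noncomputable def μ01 : Measure ℝ := volume.restrict I01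

/-- The density
`c(x,y) = 1 + (θ/(2a))·x^(1/a − 1)·(2y − 1)·sign(1/2 − x^(1/a))`. -/
noncomputable def c10 (a θ x y : ℝ) : ℝ :=
  1 + θ / (2 * a) * x ^ (1 / a - 1) * (2 * y - 1) * Real.sign (1 / 2 - x ^ (1 / a))

/-!
Write `c(x,y) = 1 + (θ/2)(2y − 1)·φ(x)` with `φ(x) = sign(1/2 − x^b)·b·x^(b−1)`, `b = 1/a`.
The substitution `u = x^b` turns `∫₀¹ φ` into `∫₀¹ sign(1/2 − u) du`, which vanishes by the
symmetry `u ↦ 1 − u`; together with `∫₀¹ (2y − 1) dy = 0` this gives both marginals.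
Since `a ≤ 1`, the factor `x^(1/a − 1)` is at most `1` on `[0,1]`, so `|c − 1| ≤ |θ|/(2a)`.
-/

open Set

namespace Real

theorem monotone_sign : Monotone Real.sign := by
  intro s t hst
  rcases lt_trichotomy s 0 with hs | rfl | hs <;> rcases lt_trichotomy t 0 with ht | rfl | ht <;>
    simp [sign_of_neg, sign_of_pos, sign_zero, *] <;> linarith

theorem abs_sign_le_one (t : ℝ) : |sign t| ≤ 1 := by
  rcases sign_apply_eq t with h | h | h <;> simp [h]

end Real

theorem setIntegral_Icc_eq_intervalIntegral {a b : ℝ} (hab : a ≤ b) (f : ℝ → ℝ) :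
    ∫ x in Icc a b, f x = ∫ x in a..b, f x := by
  rw [intervalIntegral.integral_of_le hab, integral_Icc_eq_integral_Ioc]

theorem intervalIntegral_comp_half_sub_eq_zero_of_odd {h : ℝ → ℝ} (hodd : ∀ t, h (-t) = -h t) :
    ∫ u in (0 : ℝ)..1, h (1 / 2 - u) = 0 := by
  have hsymm :=
    intervalIntegral.integral_comp_sub_left (a := 0) (b := 1) (fun u => h (1 / 2 - u)) (1 : ℝ)
  have hneg : ∀ u : ℝ, h (1 / 2 - (1 - u)) = -h (1 / 2 - u) := fun u => by
    rw [← hodd]; ring_nf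
  simp only [hneg, intervalIntegral.integral_neg, sub_self, sub_zero] at hsymm
  linarith

theorem intervalIntegral_one_add_const_mul_eq_one {φ : ℝ → ℝ} (hφ : IntervalIntegrable φ volume 0 1)
    (hφ0 : ∫ u in (0 : ℝ)..1, φ u = 0) (K : ℝ) : ∫ u in (0 : ℝ)..1, (1 + K * φ u) = 1 := by
  rw [intervalIntegral.integral_add intervalIntegrable_const (hφ.const_mul K),
    intervalIntegral.integral_const_mul, hφ0]
  simp

theorem intervalIntegral_comp_rpow_mul_deriv {b : ℝ} (hb : 0 < b) (g : ℝ → ℝ) :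
    ∫ x in (0 : ℝ)..1, g (x ^ b) * (b * x ^ (b - 1)) = ∫ u in (0 : ℝ)..1, g u := by
  have hIoo : Ioo (min (0 : ℝ) 1) (max 0 1) = Ioo 0 1 := by simp
  have := intervalIntegral.integral_comp_mul_deriv_of_deriv_nonneg (g := g)
      (continuousOn_id.rpow_const fun _ _ => Or.inr hb.le)
      (fun x hx => Real.hasDerivAt_rpow_const (Or.inl (hIoo ▸ hx).1.ne'))
      fun x hx => by have := (hIoo ▸ hx).1; positivity
  simpa [Real.zero_rpow hb.ne'] using this

theorem intervalIntegrable_comp_rpow_mul_deriv_iff {b : ℝ} (hb : 0 < b) (g : ℝ → ℝ) :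
    IntervalIntegrable (fun x => g (x ^ b) * (b * x ^ (b - 1))) volume 0 1 ↔
      IntervalIntegrable g volume 0 1 := by
  have hIoo : Ioo (min (0 : ℝ) 1) (max 0 1) = Ioo 0 1 := by simp
  have := intervalIntegral.integrable_comp_mul_deriv_iff_of_deriv_nonneg (g := g)
      (continuousOn_id.rpow_const fun _ _ => Or.inr hb.le)
      (fun x hx => Real.hasDerivAt_rpow_const (Or.inl (hIoo ▸ hx).1.ne'))
      fun x hx => by have := (hIoo ▸ hx).1; positivity
  simpa [Real.zero_rpow hb.ne'] using this

theorem intervalIntegrable_sign_half_sub :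
    IntervalIntegrable (fun u : ℝ => Real.sign (1 / 2 - u)) volume 0 1 :=
  (Real.monotone_sign.comp_antitone fun _ _ h => sub_le_sub_left h _).intervalIntegrable

theorem intervalIntegral_sign_half_sub_eq_zero : ∫ u in (0 : ℝ)..1, Real.sign (1 / 2 - u) = 0 :=
  intervalIntegral_comp_half_sub_eq_zero_of_odd fun _ => Real.sign_neg

theorem abs_c10_sub_one_le {a θ x y : ℝ} (ha : a ∈ Ioc 0 1) (hx : x ∈ I01) (hy : y ∈ I01) :
    |c10 a θ x y - 1| ≤ |θ| / (2 * a) := by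
  have hpow : |x ^ (1 / a - 1)| ≤ 1 := by
    rw [abs_of_nonneg (Real.rpow_nonneg hx.1 _)]
    exact Real.rpow_le_one hx.1 hx.2 (by rw [sub_nonneg]; exact one_le_one_div ha.1 ha.2)
  have hy' : |2 * y - 1| ≤ 1 := abs_le.2 ⟨by linarith [hy.1], by linarith [hy.2]⟩
  calc |c10 a θ x y - 1|
      = |θ / (2 * a)| * |x ^ (1 / a - 1)| * |2 * y - 1| * |Real.sign (1 / 2 - x ^ (1 / a))| := by
        rw [c10, add_sub_cancel_left, abs_mul, abs_mul, abs_mul]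
    _ ≤ |θ / (2 * a)| * 1 * 1 * 1 := by gcongr; exact Real.abs_sign_le_one _
    _ = |θ| / (2 * a) := by rw [abs_div, abs_of_pos (by linarith [ha.1] : 0 < 2 * a)]; ring

theorem intervalIntegral_c10_dx_eq_one {a : ℝ} (ha : 0 < a) (θ y : ℝ) :
    ∫ x in (0 : ℝ)..1, c10 a θ x y = 1 := by
  have hb : 0 < 1 / a := by positivity
  have hc : (fun x => c10 a θ x y) = fun x =>
      1 + θ / 2 * (2 * y - 1) * (Real.sign (1 / 2 - x ^ (1 / a)) * (1 / a * x ^ (1 / a - 1))) := by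
    funext x; rw [c10]; field_simp
  rw [hc]
  refine intervalIntegral_one_add_const_mul_eq_one
    ((intervalIntegrable_comp_rpow_mul_deriv_iff hb _).2 intervalIntegrable_sign_half_sub) ?_ _
  rw [intervalIntegral_comp_rpow_mul_deriv hb fun u => Real.sign (1 / 2 - u)]
  exact intervalIntegral_sign_half_sub_eq_zero

theorem intervalIntegral_c10_dy_eq_one (a θ x : ℝ) : ∫ y in (0 : ℝ)..1, c10 a θ x y = 1 := by
  have hc : (fun y => c10 a θ x y) = fun y =>
      1 + θ / (2 * a) * x ^ (1 / a - 1) * Real.sign (1 / 2 - x ^ (1 / a)) * (2 * y - 1) := by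
    funext y; rw [c10]; ring
  rw [hc]
  exact intervalIntegral_one_add_const_mul_eq_one
    ((by fun_prop : Continuous fun y : ℝ => 2 * y - 1).intervalIntegrable 0 1)
    (by norm_num [intervalIntegral.integral_comp_mul_sub fun y : ℝ => y]) _

/-- For `a ∈ (0,1]` and `θ ∈ [−2a, 2a]`, the function
`c10 a θ` is a copula density; moreover, if `|θ| < 2a` then
`c(x,y) ≥ 1 − |θ|/(2a) > 0` for all `x ∈ (0,1]`, `y ∈ [0,1]`, i.e. it is
bounded away from zero. -/
theorem c10_copula_density_bounded_below (a θ : ℝ) (ha : a ∈ Set.Ioc (0 : ℝ) 1)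
    (hθ : θ ∈ Set.Icc (-(2 * a)) (2 * a)) :
    (∀ x ∈ Set.Ioc (0 : ℝ) 1, ∀ y ∈ I01, 0 ≤ c10 a θ x y) ∧
    (∀ᵐ y ∂μ01, (∫ x in I01, c10 a θ x y) = 1) ∧
    (∀ᵐ x ∂μ01, (∫ y in I01, c10 a θ x y) = 1) ∧
    (|θ| < 2 * a →
      (∀ x ∈ Set.Ioc (0 : ℝ) 1, ∀ y ∈ I01, 1 - |θ| / (2 * a) ≤ c10 a θ x y) ∧
      0 < 1 - |θ| / (2 * a)) := by
  have h2a : 0 < 2 * a := by linarith [ha.1]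
  have hθa : |θ| / (2 * a) ≤ 1 := (div_le_one h2a).2 (abs_le.2 hθ)
  have lower : ∀ x ∈ Ioc (0 : ℝ) 1, ∀ y ∈ I01, 1 - |θ| / (2 * a) ≤ c10 a θ x y :=
    fun x hx y hy => by
      linarith [(abs_le.1 (abs_c10_sub_one_le (θ := θ) ha (Ioc_subset_Icc_self hx) hy)).1]
  refine ⟨fun x hx y hy => (sub_nonneg.2 hθa).trans (lower x hx y hy),
    ae_of_all _ fun y => ?_, ae_of_all _ fun x => ?_,
    fun hlt => ⟨lower, sub_pos.2 ((div_lt_one h2a).2 hlt)⟩⟩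
  · rw [I01, setIntegral_Icc_eq_intervalIntegral zero_le_one]
    exact intervalIntegral_c10_dx_eq_one ha.1 θ y
  · rw [I01, setIntegral_Icc_eq_intervalIntegral zero_le_one]
    exact intervalIntegral_c10_dy_eq_one a θ x
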